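/- arXiv:1810.01273 — 3 statements merged into one kernel-verified Lean document; each statement's English description precedes it below -/
import Mathlib

section
/- If f : ℝ² → ℂ is smooth and harmonic, then for each μ ∈ {0,1} the function q_μ f defined by (q_μ f)(x) = 2 x_μ (x₀∂₀f(x) + x₁∂₁f(x)) − (x₀² + x₁²) ∂_μ f(x) is harmonic, i.e. Δ(q_μ f) = 0. -/
noncomputable section

/-- Partial derivative with respect to the first coordinate. -/
def d0 (f : ℝ × ℝ → ℂ) : ℝ × ℝ → ℂ := fun x => deriv (fun t => f (t, x.2)) x.1

/-- Partial derivative with respect to the second coordinate. -/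
def d1 (f : ℝ × ℝ → ℂ) : ℝ × ℝ → ℂ := fun x => deriv (fun t => f (x.1, t)) x.2

/-- The μ-th partial derivative, μ ∈ {0,1}. -/
def pd : Fin 2 → (ℝ × ℝ → ℂ) → ℝ × ℝ → ℂ
  | 0 => d0
  | 1 => d1

/-- The μ-th coordinate of a point of ℝ², μ ∈ {0,1}. -/
def coord : Fin 2 → ℝ × ℝ → ℝ
  | 0 => Prod.fst
  | 1 => Prod.snd

/-- `f` is harmonic: `∂₀∂₀f + ∂₁∂₁f = 0`. -/
def Harmonic (f : ℝ × ℝ → ℂ) : Prop := ∀ x, d0 (d0 f) x + d1 (d1 f) x = 0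

/-- The special conformal generator
`(q_μ f)(x) = 2 x_μ (x₀∂₀f(x) + x₁∂₁f(x)) − (x₀² + x₁²) ∂_μ f(x)`. -/
def qOp (μ : Fin 2) (f : ℝ × ℝ → ℂ) : ℝ × ℝ → ℂ :=
  fun x => 2 * (coord μ x : ℂ) * ((x.1 : ℂ) * d0 f x + (x.2 : ℂ) * d1 f x)
    - ((x.1 ^ 2 + x.2 ^ 2 : ℝ) : ℂ) * pd μ f x

namespace QOpHarmonicAux

lemma hasDerivAt_d0 {g : ℝ × ℝ → ℂ} (hg : ContDiff ℝ (⊤ : ℕ∞) g) (x y : ℝ) :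
    HasDerivAt (fun t => g (t, y)) (d0 g (x, y)) x :=
  ((hg.differentiable (by simp) (x, y)).comp x
    (DifferentiableAt.prodMk differentiableAt_id (differentiableAt_const y))).hasDerivAt

lemma hasDerivAt_d1 {g : ℝ × ℝ → ℂ} (hg : ContDiff ℝ (⊤ : ℕ∞) g) (x y : ℝ) :
    HasDerivAt (fun t => g (x, t)) (d1 g (x, y)) y :=
  ((hg.differentiable (by simp) (x, y)).comp y
    (DifferentiableAt.prodMk (differentiableAt_const x) differentiableAt_id)).hasDerivAt

lemma d0_eq_fderiv {g : ℝ × ℝ → ℂ} (hg : ContDiff ℝ (⊤ : ℕ∞) g) (p : ℝ × ℝ) :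
    d0 g p = fderiv ℝ g p (1, 0) := by
  have h1 : HasDerivAt (fun t : ℝ => (t, p.2)) ((1 : ℝ), (0 : ℝ)) p.1 :=
    HasDerivAt.prodMk (hasDerivAt_id p.1) (hasDerivAt_const p.1 p.2)
  have h2 : HasDerivAt (fun t => g (t, p.2)) (fderiv ℝ g p (1, 0)) p.1 :=
    (hg.differentiable (by simp) p).hasFDerivAt.comp_hasDerivAt p.1 h1
  exact (hasDerivAt_d0 hg p.1 p.2).unique h2

lemma d1_eq_fderiv {g : ℝ × ℝ → ℂ} (hg : ContDiff ℝ (⊤ : ℕ∞) g) (p : ℝ × ℝ) :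
    d1 g p = fderiv ℝ g p (0, 1) := by
  have h1 : HasDerivAt (fun t : ℝ => (p.1, t)) ((0 : ℝ), (1 : ℝ)) p.2 :=
    HasDerivAt.prodMk (hasDerivAt_const p.2 p.1) (hasDerivAt_id p.2)
  have h2 : HasDerivAt (fun t => g (p.1, t)) (fderiv ℝ g p (0, 1)) p.2 :=
    (hg.differentiable (by simp) p).hasFDerivAt.comp_hasDerivAt p.2 h1
  exact (hasDerivAt_d1 hg p.1 p.2).unique h2

lemma contDiff_d0 {g : ℝ × ℝ → ℂ} (hg : ContDiff ℝ (⊤ : ℕ∞) g) : ContDiff ℝ (⊤ : ℕ∞) (d0 g) := by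
  have : d0 g = fun p => fderiv ℝ g p (1, 0) := funext fun p => d0_eq_fderiv hg p
  rw [this]
  exact (hg.fderiv_right (by simp)).clm_apply contDiff_const

lemma contDiff_d1 {g : ℝ × ℝ → ℂ} (hg : ContDiff ℝ (⊤ : ℕ∞) g) : ContDiff ℝ (⊤ : ℕ∞) (d1 g) := by
  have : d1 g = fun p => fderiv ℝ g p (0, 1) := funext fun p => d1_eq_fderiv hg p
  rw [this]
  exact (hg.fderiv_right (by simp)).clm_apply contDiff_const

lemma fderiv_apply_vec {g : ℝ × ℝ → ℂ} (hg : ContDiff ℝ (⊤ : ℕ∞) g) (p : ℝ × ℝ) (v w : ℝ × ℝ) :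
    fderiv ℝ (fun q => fderiv ℝ g q v) p w = fderiv ℝ (fderiv ℝ g) p w v := by
  have hd : HasFDerivAt (fderiv ℝ g) (fderiv ℝ (fderiv ℝ g) p) p :=
    ((hg.fderiv_right (m := (⊤ : ℕ∞)) (by simp)).differentiable (by simp) p).hasFDerivAt
  have h : HasFDerivAt (fun q => fderiv ℝ g q v)
      ((ContinuousLinearMap.apply ℝ ℂ v).comp (fderiv ℝ (fderiv ℝ g) p)) p :=
    (ContinuousLinearMap.apply ℝ ℂ v).hasFDerivAt.comp p hd
  rw [h.fderiv]; rfl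

lemma clairaut {g : ℝ × ℝ → ℂ} (hg : ContDiff ℝ (⊤ : ℕ∞) g) (p : ℝ × ℝ) :
    d0 (d1 g) p = d1 (d0 g) p := by
  have e1 : d1 g = fun q => fderiv ℝ g q (0, 1) := funext fun q => d1_eq_fderiv hg q
  have e0 : d0 g = fun q => fderiv ℝ g q (1, 0) := funext fun q => d0_eq_fderiv hg q
  rw [d0_eq_fderiv (contDiff_d1 hg) p, d1_eq_fderiv (contDiff_d0 hg) p, e1, e0,
    fderiv_apply_vec hg, fderiv_apply_vec hg]
  have hsymm := second_derivative_symmetric (f := g) (f' := fderiv ℝ g)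
    (f'' := fderiv ℝ (fderiv ℝ g) p)
    (fun y => (hg.differentiable (by simp) y).hasFDerivAt)
    (((hg.fderiv_right (m := (⊤ : ℕ∞)) (by simp)).differentiable (by simp) p).hasFDerivAt)
  exact hsymm _ _

lemma d0_add {g h : ℝ × ℝ → ℂ} (hg : ContDiff ℝ (⊤ : ℕ∞) g) (hh : ContDiff ℝ (⊤ : ℕ∞) h) (p : ℝ × ℝ) :
    d0 (fun q => g q + h q) p = d0 g p + d0 h p :=
  ((hasDerivAt_d0 hg p.1 p.2).add (hasDerivAt_d0 hh p.1 p.2)).deriv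

lemma d1_add {g h : ℝ × ℝ → ℂ} (hg : ContDiff ℝ (⊤ : ℕ∞) g) (hh : ContDiff ℝ (⊤ : ℕ∞) h) (p : ℝ × ℝ) :
    d1 (fun q => g q + h q) p = d1 g p + d1 h p :=
  ((hasDerivAt_d1 hg p.1 p.2).add (hasDerivAt_d1 hh p.1 p.2)).deriv

lemma harmonic_d0 {g : ℝ × ℝ → ℂ} (hg : ContDiff ℝ (⊤ : ℕ∞) g) (hh : Harmonic g) :
    Harmonic (d0 g) := by
  intro x
  have e1 : d1 (d0 g) = d0 (d1 g) := funext fun p => (clairaut hg p).symm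
  have e2 : d1 (d0 (d1 g)) = d0 (d1 (d1 g)) :=
    funext fun p => (clairaut (contDiff_d1 hg) p).symm
  rw [e1, e2, ← d0_add (contDiff_d0 (contDiff_d0 hg)) (contDiff_d1 (contDiff_d1 hg))]
  have : (fun q => d0 (d0 g) q + d1 (d1 g) q) = fun _ => (0 : ℂ) := funext fun q => hh q
  rw [this]
  simp [d0]

lemma harmonic_d1 {g : ℝ × ℝ → ℂ} (hg : ContDiff ℝ (⊤ : ℕ∞) g) (hh : Harmonic g) :
    Harmonic (d1 g) := by
  intro x
  have e1 : d0 (d1 g) = d1 (d0 g) := funext fun p => clairaut hg p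
  have e2 : d0 (d1 (d0 g)) = d1 (d0 (d0 g)) := funext fun p => clairaut (contDiff_d0 hg) p
  rw [e1, e2, ← d1_add (contDiff_d0 (contDiff_d0 hg)) (contDiff_d1 (contDiff_d1 hg))]
  have : (fun q => d0 (d0 g) q + d1 (d1 g) q) = fun _ => (0 : ℂ) := funext fun q => hh q
  rw [this]
  simp [d1]

/-- A general (complex-coefficient) quadratic polynomial in the coordinates. -/
def poly (α β γ δ ε c : ℂ) : ℝ × ℝ → ℂ :=
  fun q => α * (q.1:ℂ) * (q.1:ℂ) + β * (q.1:ℂ) * (q.2:ℂ) + γ * (q.2:ℂ) * (q.2:ℂ)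
    + δ * (q.1:ℂ) + ε * (q.2:ℂ) + c

lemma contDiff_poly (α β γ δ ε c : ℂ) : ContDiff ℝ (⊤ : ℕ∞) (poly α β γ δ ε c) := by
  have h1 : ContDiff ℝ (⊤ : ℕ∞) (fun q : ℝ × ℝ => ((q.1 : ℝ) : ℂ)) :=
    Complex.ofRealCLM.contDiff.comp contDiff_fst
  have h2 : ContDiff ℝ (⊤ : ℕ∞) (fun q : ℝ × ℝ => ((q.2 : ℝ) : ℂ)) :=
    Complex.ofRealCLM.contDiff.comp contDiff_snd
  exact ((((((contDiff_const.mul h1).mul h1).add ((contDiff_const.mul h1).mul h2)).add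
    ((contDiff_const.mul h2).mul h2)).add (contDiff_const.mul h1)).add
    (contDiff_const.mul h2)).add contDiff_const

lemma contDiff_poly_mul {w : ℝ × ℝ → ℂ} (hw : ContDiff ℝ (⊤ : ℕ∞) w) (α β γ δ ε c : ℂ) :
    ContDiff ℝ (⊤ : ℕ∞) (fun q => poly α β γ δ ε c q * w q) :=
  (contDiff_poly α β γ δ ε c).mul hw

lemma d0_poly_mul {w : ℝ × ℝ → ℂ} (hw : ContDiff ℝ (⊤ : ℕ∞) w) (α β γ δ ε c : ℂ) (p : ℝ × ℝ) :
    d0 (fun q => poly α β γ δ ε c q * w q) p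
      = (2 * α * (p.1:ℂ) + β * (p.2:ℂ) + δ) * w p + poly α β γ δ ε c p * d0 w p := by
  obtain ⟨x, y⟩ := p
  have hR : HasDerivAt (fun t : ℝ => (t:ℂ)) 1 x := (hasDerivAt_id x).ofReal_comp
  have hprod := ((((((((hR.const_mul α).mul hR).add
      ((hR.const_mul β).mul_const (y:ℂ))).add_const (γ*(y:ℂ)*(y:ℂ))).add
      (hR.const_mul δ)).add_const (ε*(y:ℂ))).add_const c).mul (hasDerivAt_d0 hw x y))
  refine Eq.trans hprod.deriv ?_
  simp only [poly, Pi.mul_apply, Pi.add_apply]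
  ring

lemma d1_poly_mul {w : ℝ × ℝ → ℂ} (hw : ContDiff ℝ (⊤ : ℕ∞) w) (α β γ δ ε c : ℂ) (p : ℝ × ℝ) :
    d1 (fun q => poly α β γ δ ε c q * w q) p
      = (β * (p.1:ℂ) + 2 * γ * (p.2:ℂ) + ε) * w p + poly α β γ δ ε c p * d1 w p := by
  obtain ⟨x, y⟩ := p
  have hR : HasDerivAt (fun t : ℝ => (t:ℂ)) 1 y := (hasDerivAt_id y).ofReal_comp
  have hprod := (((((((hR.const_mul (β*(x:ℂ))).const_add (α*(x:ℂ)*(x:ℂ))).add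
      ((hR.const_mul γ).mul hR)).add_const (δ*(x:ℂ))).add
      (hR.const_mul ε)).add_const c).mul (hasDerivAt_d1 hw x y))
  refine Eq.trans hprod.deriv ?_
  simp only [poly, Pi.mul_apply, Pi.add_apply]
  ring

lemma lap_poly_mul {w : ℝ × ℝ → ℂ} (hw : ContDiff ℝ (⊤ : ℕ∞) w) (α β γ δ ε c : ℂ) (p : ℝ × ℝ) :
    d0 (d0 (fun q => poly α β γ δ ε c q * w q)) p
      + d1 (d1 (fun q => poly α β γ δ ε c q * w q)) p
    = (2*α + 2*γ) * w p + 2*(2*α*(p.1:ℂ) + β*(p.2:ℂ) + δ) * d0 w p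
      + 2*(β*(p.1:ℂ) + 2*γ*(p.2:ℂ) + ε) * d1 w p
      + poly α β γ δ ε c p * (d0 (d0 w) p + d1 (d1 w) p) := by
  have e0 : d0 (fun q => poly α β γ δ ε c q * w q)
      = fun q => poly 0 0 0 (2*α) β δ q * w q + poly α β γ δ ε c q * d0 w q := by
    funext q
    rw [d0_poly_mul hw]
    simp only [poly]
    ring
  have e1 : d1 (fun q => poly α β γ δ ε c q * w q)
      = fun q => poly 0 0 0 β (2*γ) ε q * w q + poly α β γ δ ε c q * d1 w q := by
    funext q
    rw [d1_poly_mul hw]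
    simp only [poly]
    ring
  rw [e0, e1,
    d0_add (contDiff_poly_mul hw 0 0 0 (2*α) β δ) (contDiff_poly_mul (contDiff_d0 hw) α β γ δ ε c),
    d1_add (contDiff_poly_mul hw 0 0 0 β (2*γ) ε) (contDiff_poly_mul (contDiff_d1 hw) α β γ δ ε c),
    d0_poly_mul hw, d0_poly_mul (contDiff_d0 hw), d1_poly_mul hw, d1_poly_mul (contDiff_d1 hw)]
  simp only [poly]
  ring

lemma lap_add {F G : ℝ × ℝ → ℂ} (hF : ContDiff ℝ (⊤ : ℕ∞) F) (hG : ContDiff ℝ (⊤ : ℕ∞) G) (p : ℝ × ℝ) :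
    d0 (d0 (fun q => F q + G q)) p + d1 (d1 (fun q => F q + G q)) p
      = (d0 (d0 F) p + d1 (d1 F) p) + (d0 (d0 G) p + d1 (d1 G) p) := by
  have e0 : d0 (fun q => F q + G q) = fun q => d0 F q + d0 G q := funext (d0_add hF hG)
  have e1 : d1 (fun q => F q + G q) = fun q => d1 F q + d1 G q := funext (d1_add hF hG)
  rw [e0, e1, d0_add (contDiff_d0 hF) (contDiff_d0 hG), d1_add (contDiff_d1 hF) (contDiff_d1 hG)]
  ring

end QOpHarmonicAux

open QOpHarmonicAux in
/-- If `f : ℝ² → ℂ` is smooth and harmonic, then for each μ ∈ {0,1} the function `q_μ f`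
is harmonic. -/
theorem qOp_harmonic (f : ℝ × ℝ → ℂ) (hf : ContDiff ℝ (⊤ : ℕ∞) f) (hharm : Harmonic f)
    (μ : Fin 2) : Harmonic (qOp μ f) := by
  have hu : ContDiff ℝ (⊤ : ℕ∞) (d0 f) := contDiff_d0 hf
  have hv : ContDiff ℝ (⊤ : ℕ∞) (d1 f) := contDiff_d1 hf
  fin_cases μ
  · show Harmonic (qOp 0 f)
    have hq : qOp 0 f
        = fun q => poly 1 0 (-1) 0 0 0 q * d0 f q + poly 0 2 0 0 0 0 q * d1 f q := by
      funext q
      simp only [qOp, poly, show coord 0 = Prod.fst from rfl, show pd 0 = d0 from rfl]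
      push_cast
      ring
    rw [hq]
    intro x
    rw [lap_add (contDiff_poly_mul hu 1 0 (-1) 0 0 0) (contDiff_poly_mul hv 0 2 0 0 0 0),
      lap_poly_mul hu, lap_poly_mul hv]
    have H := hharm x
    have C := clairaut hf x
    have HU := harmonic_d0 hf hharm x
    have HV := harmonic_d1 hf hharm x
    simp only [poly]
    linear_combination (4*(x.1:ℂ)) * H + (4*(x.2:ℂ)) * C
      + (1 * (x.1:ℂ) * (x.1:ℂ) + 0 + (-1) * (x.2:ℂ) * (x.2:ℂ) + 0 + 0 + 0) * HU
      + (0 + 2 * (x.1:ℂ) * (x.2:ℂ) + 0 + 0 + 0 + 0) * HV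
  · show Harmonic (qOp 1 f)
    have hq : qOp 1 f
        = fun q => poly 0 2 0 0 0 0 q * d0 f q + poly (-1) 0 1 0 0 0 q * d1 f q := by
      funext q
      simp only [qOp, poly, show coord 1 = Prod.snd from rfl, show pd 1 = d1 from rfl]
      push_cast
      ring
    rw [hq]
    intro x
    rw [lap_add (contDiff_poly_mul hu 0 2 0 0 0 0) (contDiff_poly_mul hv (-1) 0 1 0 0 0),
      lap_poly_mul hu, lap_poly_mul hv]
    have H := hharm x
    have C := clairaut hf x
    have HU := harmonic_d0 hf hharm x
    have HV := harmonic_d1 hf hharm x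
    simp only [poly]
    linear_combination (4*(x.2:ℂ)) * H + (-4*(x.1:ℂ)) * C
      + (2 * (x.1:ℂ) * (x.2:ℂ)) * HU
      + ((-1) * (x.1:ℂ) * (x.1:ℂ) + 1 * (x.2:ℂ) * (x.2:ℂ)) * HV
end
end

section
/- Let f : ℝ² → ℂ be smooth, let Φ(θ, φ) = (sin θ cos φ, sin θ sin φ) be the holographic coordinate map, and let g = f ∘ Φ. Then for all θ ∈ (0, π/2) and φ ∈ ℝ, the identity tan θ · ∂_θ(tan θ · ∂_θ g)(θ, φ) + ∂_φ ∂_φ g(θ, φ) = sin²θ · (Δf)(Φ(θ, φ)) holds, where Δf = ∂₀∂₀f + ∂₁∂₁f. -/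
noncomputable section

/-- For smooth `f : ℝ² → ℂ`, the holographic coordinate map
`Φ(θ, φ) = (sin θ cos φ, sin θ sin φ)` and `g = f ∘ Φ`, for all `θ ∈ (0, π/2)` and `φ`:
`tan θ ∂_θ (tan θ ∂_θ g) + ∂_φ ∂_φ g = sin²θ · Δf(Φ(θ, φ))`. -/
theorem laplacian_holographic (f : ℝ × ℝ → ℂ) (hf : ContDiff ℝ (⊤ : ℕ∞) f)
    (Φ : ℝ × ℝ → ℝ × ℝ)
    (hΦ : Φ = fun p => (Real.sin p.1 * Real.cos p.2, Real.sin p.1 * Real.sin p.2))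
    (g : ℝ × ℝ → ℂ) (hg : g = f ∘ Φ)
    (θ φ : ℝ) (hθ : θ ∈ Set.Ioo 0 (Real.pi / 2)) :
    (Real.tan θ : ℂ) * d0 (fun p => (Real.tan p.1 : ℂ) * d0 g p) (θ, φ)
      + d1 (d1 g) (θ, φ) =
      ((Real.sin θ : ℂ)) ^ 2 * (d0 (d0 f) (Φ (θ, φ)) + d1 (d1 f) (Φ (θ, φ))) := by
  subst hΦ hg
  obtain ⟨hθ0, hθ1⟩ := hθ
  have hcosθ : Real.cos θ ≠ 0 :=
    ne_of_gt (Real.cos_pos_of_mem_Ioo ⟨by linarith [Real.pi_pos], hθ1⟩)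
  set e0 : ℝ × ℝ := (1, 0) with he0
  set e1 : ℝ × ℝ := (0, 1) with he1
  -- expansion of a CLM on the basis
  have hexp : ∀ (L : (ℝ × ℝ) →L[ℝ] ℂ) (v : ℝ × ℝ), L v = v.1 • L e0 + v.2 • L e1 := by
    intro L v
    have hv : v = v.1 • e0 + v.2 • e1 := by simp [he0, he1, Prod.ext_iff]
    conv_lhs => rw [hv]
    rw [map_add, map_smul, map_smul]
  -- chain rule along a curve
  have hchain : ∀ (F : ℝ × ℝ → ℂ), ContDiff ℝ (⊤ : ℕ∞) F → ∀ (γ : ℝ → ℝ × ℝ) (v : ℝ × ℝ) (t : ℝ),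
      HasDerivAt γ v t →
      HasDerivAt (fun s => F (γ s))
        (v.1 • fderiv ℝ F (γ t) e0 + v.2 • fderiv ℝ F (γ t) e1) t := by
    intro F hF γ v t hγ
    have h1 := (hF.differentiable (by simp) (γ t)).hasFDerivAt.comp_hasDerivAt t hγ
    rw [← hexp]
    exact h1
  have hcurveθ : ∀ (t s : ℝ),
      HasDerivAt (fun u => (Real.sin u * Real.cos s, Real.sin u * Real.sin s))
        (Real.cos t * Real.cos s, Real.cos t * Real.sin s) t :=
    fun t s => ((Real.hasDerivAt_sin t).mul_const _).prodMk ((Real.hasDerivAt_sin t).mul_const _)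
  have hcurveφ : ∀ (t s : ℝ),
      HasDerivAt (fun u => (Real.sin t * Real.cos u, Real.sin t * Real.sin u))
        (Real.sin t * -Real.sin s, Real.sin t * Real.cos s) s :=
    fun t s => ((Real.hasDerivAt_cos s).const_mul _).prodMk ((Real.hasDerivAt_sin s).const_mul _)
  have hDθ : ∀ (F : ℝ × ℝ → ℂ), ContDiff ℝ (⊤ : ℕ∞) F → ∀ (t s : ℝ),
      HasDerivAt (fun u => F (Real.sin u * Real.cos s, Real.sin u * Real.sin s))
        ((Real.cos t * Real.cos s) •
            fderiv ℝ F (Real.sin t * Real.cos s, Real.sin t * Real.sin s) e0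
          + (Real.cos t * Real.sin s) •
            fderiv ℝ F (Real.sin t * Real.cos s, Real.sin t * Real.sin s) e1) t :=
    fun F hF t s => hchain F hF _ _ t (hcurveθ t s)
  have hDφ : ∀ (F : ℝ × ℝ → ℂ), ContDiff ℝ (⊤ : ℕ∞) F → ∀ (t s : ℝ),
      HasDerivAt (fun u => F (Real.sin t * Real.cos u, Real.sin t * Real.sin u))
        ((Real.sin t * -Real.sin s) •
            fderiv ℝ F (Real.sin t * Real.cos s, Real.sin t * Real.sin s) e0
          + (Real.sin t * Real.cos s) •
            fderiv ℝ F (Real.sin t * Real.cos s, Real.sin t * Real.sin s) e1) s :=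
    fun F hF t s => hchain F hF _ _ s (hcurveφ t s)
  -- d0/d1 of a smooth function via fderiv
  have hd0 : ∀ (F : ℝ × ℝ → ℂ), ContDiff ℝ (⊤ : ℕ∞) F → ∀ x : ℝ × ℝ, d0 F x = fderiv ℝ F x e0 := by
    intro F hF x
    have h := (hF.differentiable (by simp) x).hasFDerivAt.comp_hasDerivAt x.1
      ((hasDerivAt_id x.1).prodMk (hasDerivAt_const x.1 x.2))
    simpa [d0, Function.comp_def, he0] using h.deriv
  have hd1 : ∀ (F : ℝ × ℝ → ℂ), ContDiff ℝ (⊤ : ℕ∞) F → ∀ x : ℝ × ℝ, d1 F x = fderiv ℝ F x e1 := by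
    intro F hF x
    have h := (hF.differentiable (by simp) x).hasFDerivAt.comp_hasDerivAt x.2
      ((hasDerivAt_const x.2 x.1).prodMk (hasDerivAt_id x.2))
    simpa [d1, Function.comp_def, he1] using h.deriv
  -- first partials as functions
  set F0 : ℝ × ℝ → ℂ := fun x => fderiv ℝ f x e0 with hF0def
  set F1 : ℝ × ℝ → ℂ := fun x => fderiv ℝ f x e1 with hF1def
  have hf' : ContDiff ℝ (⊤ : ℕ∞) (fderiv ℝ f) := hf.fderiv_right (by simp)
  have hF0 : ContDiff ℝ (⊤ : ℕ∞) F0 := hf'.clm_apply contDiff_const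
  have hF1 : ContDiff ℝ (⊤ : ℕ∞) F1 := hf'.clm_apply contDiff_const
  have hf'' : ∀ x, HasFDerivAt (fderiv ℝ f) (fderiv ℝ (fderiv ℝ f) x) x :=
    fun x => (hf'.differentiable (by simp) x).hasFDerivAt
  have hfd : ∀ y, HasFDerivAt f (fderiv ℝ f y) y :=
    fun y => (hf.differentiable (by simp) y).hasFDerivAt
  have hfdF0 : ∀ (x : ℝ × ℝ) (w : ℝ × ℝ), fderiv ℝ F0 x w = fderiv ℝ (fderiv ℝ f) x w e0 := by
    intro x w
    have h : HasFDerivAt F0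
        ((ContinuousLinearMap.apply ℝ ℂ e0).comp (fderiv ℝ (fderiv ℝ f) x)) x :=
      (ContinuousLinearMap.apply ℝ ℂ e0).hasFDerivAt.comp x (hf'' x)
    rw [h.fderiv]; rfl
  have hfdF1 : ∀ (x : ℝ × ℝ) (w : ℝ × ℝ), fderiv ℝ F1 x w = fderiv ℝ (fderiv ℝ f) x w e1 := by
    intro x w
    have h : HasFDerivAt F1
        ((ContinuousLinearMap.apply ℝ ℂ e1).comp (fderiv ℝ (fderiv ℝ f) x)) x :=
      (ContinuousLinearMap.apply ℝ ℂ e1).hasFDerivAt.comp x (hf'' x)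
    rw [h.fderiv]; rfl
  -- the point
  set P : ℝ × ℝ := (Real.sin θ * Real.cos φ, Real.sin θ * Real.sin φ) with hP
  set A : ℂ := fderiv ℝ (fderiv ℝ f) P e0 e0 with hA
  set B : ℂ := fderiv ℝ (fderiv ℝ f) P e1 e0 with hB
  set C : ℂ := fderiv ℝ (fderiv ℝ f) P e0 e1 with hC
  set D : ℂ := fderiv ℝ (fderiv ℝ f) P e1 e1 with hD
  have hBC : C = B := second_derivative_symmetric hfd (hf'' P) e0 e1
  -- expansion of d0 g
  have hdg0 : ∀ t s : ℝ,
      d0 (f ∘ fun p => (Real.sin p.1 * Real.cos p.2, Real.sin p.1 * Real.sin p.2)) (t, s) =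
        (Real.cos t * Real.cos s) •
            F0 (Real.sin t * Real.cos s, Real.sin t * Real.sin s)
          + (Real.cos t * Real.sin s) •
            F1 (Real.sin t * Real.cos s, Real.sin t * Real.sin s) := by
    intro t s
    have h := (hDθ f hf t s).deriv
    simpa [d0, Function.comp] using h
  have hdg1 : ∀ t s : ℝ,
      d1 (f ∘ fun p => (Real.sin p.1 * Real.cos p.2, Real.sin p.1 * Real.sin p.2)) (t, s) =
        (Real.sin t * -Real.sin s) •
            F0 (Real.sin t * Real.cos s, Real.sin t * Real.sin s)
          + (Real.sin t * Real.cos s) •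
            F1 (Real.sin t * Real.cos s, Real.sin t * Real.sin s) := by
    intro t s
    have h := (hDφ f hf t s).deriv
    simpa [d1, Function.comp] using h
  -- θ-part
  have hF0θ : HasDerivAt (fun u => F0 (Real.sin u * Real.cos φ, Real.sin u * Real.sin φ))
      ((Real.cos θ * Real.cos φ) • A + (Real.cos θ * Real.sin φ) • B) θ := by
    have h := hDθ F0 hF0 θ φ
    rwa [hfdF0, hfdF0, ← hP, ← hA, ← hB] at h
  have hF1θ : HasDerivAt (fun u => F1 (Real.sin u * Real.cos φ, Real.sin u * Real.sin φ))
      ((Real.cos θ * Real.cos φ) • C + (Real.cos θ * Real.sin φ) • D) θ := by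
    have h := hDθ F1 hF1 θ φ
    rwa [hfdF1, hfdF1, ← hP, ← hC, ← hD] at h
  have hF0φ : HasDerivAt (fun u => F0 (Real.sin θ * Real.cos u, Real.sin θ * Real.sin u))
      ((Real.sin θ * -Real.sin φ) • A + (Real.sin θ * Real.cos φ) • B) φ := by
    have h := hDφ F0 hF0 θ φ
    rwa [hfdF0, hfdF0, ← hP, ← hA, ← hB] at h
  have hF1φ : HasDerivAt (fun u => F1 (Real.sin θ * Real.cos u, Real.sin θ * Real.sin u))
      ((Real.sin θ * -Real.sin φ) • C + (Real.sin θ * Real.cos φ) • D) φ := by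
    have h := hDφ F1 hF1 θ φ
    rwa [hfdF1, hfdF1, ← hP, ← hC, ← hD] at h
  -- the nice θ-function
  have hnice : HasDerivAt (fun u =>
        (Real.sin u * Real.cos φ) • F0 (Real.sin u * Real.cos φ, Real.sin u * Real.sin φ)
        + (Real.sin u * Real.sin φ) • F1 (Real.sin u * Real.cos φ, Real.sin u * Real.sin φ))
      ((Real.sin θ * Real.cos φ) • ((Real.cos θ * Real.cos φ) • A + (Real.cos θ * Real.sin φ) • B)
        + (Real.cos θ * Real.cos φ) • F0 P
        + ((Real.sin θ * Real.sin φ) • ((Real.cos θ * Real.cos φ) • C + (Real.cos θ * Real.sin φ) • D)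
          + (Real.cos θ * Real.sin φ) • F1 P)) θ := by
    exact (((Real.hasDerivAt_sin θ).mul_const (Real.cos φ)).smul hF0θ).add
      (((Real.hasDerivAt_sin θ).mul_const (Real.sin φ)).smul hF1θ)
  -- eventual equality with the tan-function
  have hev : (fun t => (Real.tan t : ℂ) *
        d0 (f ∘ fun p => (Real.sin p.1 * Real.cos p.2, Real.sin p.1 * Real.sin p.2)) (t, φ))
      =ᶠ[nhds θ] (fun u =>
        (Real.sin u * Real.cos φ) • F0 (Real.sin u * Real.cos φ, Real.sin u * Real.sin φ)
        + (Real.sin u * Real.sin φ) • F1 (Real.sin u * Real.cos φ, Real.sin u * Real.sin φ)) := by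
    have hne : ∀ᶠ t in nhds θ, Real.cos t ≠ 0 :=
      Real.continuous_cos.continuousAt.eventually_ne hcosθ
    filter_upwards [hne] with t ht
    rw [hdg0 t φ]
    rw [Real.tan_eq_sin_div_cos]
    simp only [Complex.real_smul, Complex.ofReal_div, Complex.ofReal_mul]
    have hct : Complex.cos t ≠ 0 := by
      rw [← Complex.ofReal_cos]; exact_mod_cast ht
    have hc : (Real.cos t : ℂ) ≠ 0 := by exact_mod_cast ht
    linear_combination ((Real.sin t : ℂ) * (Real.cos φ : ℂ) * F0 (Real.sin t * Real.cos φ, Real.sin t * Real.sin φ)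
      + (Real.sin t : ℂ) * (Real.sin φ : ℂ) * F1 (Real.sin t * Real.cos φ, Real.sin t * Real.sin φ)) * mul_inv_cancel₀ hc
  -- compute the LHS terms
  have hlhs0 : d0 (fun p => (Real.tan p.1 : ℂ) *
      d0 (f ∘ fun p => (Real.sin p.1 * Real.cos p.2, Real.sin p.1 * Real.sin p.2)) p) (θ, φ) =
      (Real.sin θ * Real.cos φ) • ((Real.cos θ * Real.cos φ) • A + (Real.cos θ * Real.sin φ) • B)
        + (Real.cos θ * Real.cos φ) • F0 P
        + ((Real.sin θ * Real.sin φ) • ((Real.cos θ * Real.cos φ) • C + (Real.cos θ * Real.sin φ) • D)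
          + (Real.cos θ * Real.sin φ) • F1 P) := by
    show deriv (fun t => (Real.tan t : ℂ) *
      d0 (f ∘ fun p => (Real.sin p.1 * Real.cos p.2, Real.sin p.1 * Real.sin p.2)) (t, φ)) θ = _
    rw [hev.deriv_eq]
    exact hnice.deriv
  have hlhs1 : d1 (d1 (f ∘ fun p => (Real.sin p.1 * Real.cos p.2, Real.sin p.1 * Real.sin p.2))) (θ, φ) =
      (Real.sin θ * -Real.sin φ) • ((Real.sin θ * -Real.sin φ) • A + (Real.sin θ * Real.cos φ) • B)
        + (Real.sin θ * -Real.cos φ) • F0 P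
        + ((Real.sin θ * Real.cos φ) • ((Real.sin θ * -Real.sin φ) • C + (Real.sin θ * Real.cos φ) • D)
          + (Real.sin θ * -Real.sin φ) • F1 P) := by
    have heq : (fun s => d1 (f ∘ fun p => (Real.sin p.1 * Real.cos p.2, Real.sin p.1 * Real.sin p.2)) (θ, s))
        = (fun s => (Real.sin θ * -Real.sin s) • F0 (Real.sin θ * Real.cos s, Real.sin θ * Real.sin s)
          + (Real.sin θ * Real.cos s) • F1 (Real.sin θ * Real.cos s, Real.sin θ * Real.sin s)) :=
      funext fun s => hdg1 θ s
    show deriv (fun s => d1 (f ∘ fun p => (Real.sin p.1 * Real.cos p.2, Real.sin p.1 * Real.sin p.2)) (θ, s)) φ = _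
    rw [heq]
    have h := ((((Real.hasDerivAt_sin φ).neg.const_mul (Real.sin θ)).smul hF0φ).add
      (((Real.hasDerivAt_cos φ).const_mul (Real.sin θ)).smul hF1φ)).deriv
    convert h using 2 <;> rfl
  -- RHS terms
  have hrhs0 : d0 (d0 f) P = A := by
    have h1 : d0 f = F0 := funext fun x => hd0 f hf x
    rw [h1, hd0 F0 hF0, hfdF0]
  have hrhs1 : d1 (d1 f) P = D := by
    have h1 : d1 f = F1 := funext fun x => hd1 f hf x
    rw [h1, hd1 F1 hF1, hfdF1]
  have hΦP : (fun p : ℝ × ℝ => (Real.sin p.1 * Real.cos p.2, Real.sin p.1 * Real.sin p.2)) (θ, φ) = P := rfl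
  rw [hlhs0, hlhs1, hΦP, hrhs0, hrhs1, hBC]
  have htan : (Real.tan θ : ℂ) * (Real.cos θ : ℂ) = (Real.sin θ : ℂ) := by
    exact_mod_cast congrArg Complex.ofReal (Real.tan_mul_cos hcosθ)
  have hpy : (Real.sin φ : ℂ) ^ 2 + (Real.cos φ : ℂ) ^ 2 = 1 := by
    exact_mod_cast congrArg (Complex.ofReal) (Real.sin_sq_add_cos_sq φ)
  set v0 : ℂ := F0 P with hv0
  set v1 : ℂ := F1 P with hv1
  simp only [Complex.real_smul, Complex.ofReal_mul, Complex.ofReal_neg]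
  set sθ : ℂ := (Real.sin θ : ℂ)
  set cθ : ℂ := (Real.cos θ : ℂ)
  set sφ : ℂ := (Real.sin φ : ℂ)
  set cφ : ℂ := (Real.cos φ : ℂ)
  linear_combination (sθ * cφ * (cφ * A + sφ * B) + cφ * v0 + sθ * sφ * (cφ * B + sφ * D) + sφ * v1) * htan
    + sθ ^ 2 * (A + D) * hpy
end
end

section
/- For every α ∈ ℂ, the special conformal operators in holographic coordinates raise the scale dimension of the holographic solutions by one unit: writing υ^α(θ, φ) = e^{iαφ} (sin θ)^α, for all θ ∈ (0, π/2) and φ ∈ ℝ one has (cos φ · sin θ · tan θ · ∂_θ + sin φ · sin θ · ∂_φ) υ^α = α · υ^{α+1} and (sin φ · sin θ · tan θ · ∂_θ − cos φ · sin θ · ∂_φ) υ^α = −i α · υ^{α+1}. -/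
noncomputable section

/-- The holographic solution `υ^α(θ, φ) = e^{iαφ} (sin θ)^α`, where
`(sin θ)^α = exp(α log(sin θ))` for `θ ∈ (0, π/2)`. -/
def υ (α : ℂ) (θ φ : ℝ) : ℂ :=
  Complex.exp (Complex.I * α * φ) * Complex.exp (α * Real.log (Real.sin θ))

/-!
Both factors of `υ^α` are exponentials, so each derivative just multiplies `υ^α` by a factor:
`∂_θ υ^α = α cot θ · υ^α` and `∂_φ υ^α = iα · υ^α`. Since `tan θ · cot θ = 1`, both operators
produce `α sin θ · υ^α` times `cos φ + i sin φ` and `sin φ − i cos φ = −i (cos φ + i sin φ)`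
respectively, and `e^{iφ} sin θ · υ^α = υ^{α+1}`.
-/

open Complex

theorem HasDerivAt.cexp_mul_log {f : ℝ → ℝ} {f' x : ℝ} (hf : HasDerivAt f f' x) (hx : f x ≠ 0)
    (α : ℂ) :
    HasDerivAt (fun t => cexp (α * Real.log (f t)))
      (α * (f' / f x : ℝ) * cexp (α * Real.log (f x))) x := by
  have hlog : HasDerivAt (fun t => (Real.log (f t) : ℂ)) (f' / f x : ℝ) x :=
    (hf.log hx).ofReal_comp
  exact ((hlog.const_mul α).cexp).congr_deriv (by ring)

theorem hasDerivAt_υ_polar (α : ℂ) {θ : ℝ} (φ : ℝ) (hθ : Real.sin θ ≠ 0) :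
    HasDerivAt (fun t => υ α t φ) (α * (Real.cos θ / Real.sin θ : ℝ) * υ α θ φ) θ := by
  have h := ((Real.hasDerivAt_sin θ).cexp_mul_log hθ α).const_mul (cexp (I * α * φ))
  exact h.congr_deriv (by simp only [υ]; ring)

theorem hasDerivAt_υ_azimuth (α : ℂ) (θ φ : ℝ) :
    HasDerivAt (fun p => υ α θ p) (I * α * υ α θ φ) φ := by
  have h := ((((hasDerivAt_id φ).ofReal_comp).const_mul (I * α)).cexp).mul_const
    (cexp (α * Real.log (Real.sin θ)))
  exact h.congr_deriv (by simp only [υ, id, ofReal_one]; ring)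

theorem υ_add_one (α : ℂ) {θ : ℝ} (φ : ℝ) (hθ : 0 < Real.sin θ) :
    υ (α + 1) θ φ = (Real.cos φ + Real.sin φ * I) * Real.sin θ * υ α θ φ := by
  have hsin : cexp (Real.log (Real.sin θ)) = Real.sin θ := by
    rw [← ofReal_exp, Real.exp_log hθ]
  simp only [υ, add_mul, mul_add, mul_one, one_mul, exp_add, hsin, mul_comm I (φ : ℂ),
    exp_mul_I, ofReal_cos, ofReal_sin]
  ring

/-- For every `α ∈ ℂ`, the special conformal operators
`q₀ = cos φ sin θ tan θ ∂_θ + sin φ sin θ ∂_φ` and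
`q₁ = sin φ sin θ tan θ ∂_θ − cos φ sin θ ∂_φ`
raise the scale dimension of `υ^α` by one unit:
`q₀ υ^α = α υ^{α+1}` and `q₁ υ^α = −iα υ^{α+1}`. -/
theorem special_conformal_raises_scale_dimension (α : ℂ) (θ φ : ℝ)
    (hθ : θ ∈ Set.Ioo 0 (Real.pi / 2)) :
    (Real.cos φ : ℂ) * (Real.sin θ : ℂ) * (Real.tan θ : ℂ) * deriv (fun t => υ α t φ) θ
        + (Real.sin φ : ℂ) * (Real.sin θ : ℂ) * deriv (fun p => υ α θ p) φ =
      α * υ (α + 1) θ φ ∧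
    (Real.sin φ : ℂ) * (Real.sin θ : ℂ) * (Real.tan θ : ℂ) * deriv (fun t => υ α t φ) θ
        - (Real.cos φ : ℂ) * (Real.sin θ : ℂ) * deriv (fun p => υ α θ p) φ =
      -(Complex.I * α * υ (α + 1) θ φ) := by
  have hsin : 0 < Real.sin θ :=
    Real.sin_pos_of_pos_of_lt_pi hθ.1 (hθ.2.trans (by linarith [Real.pi_pos]))
  have hcos : 0 < Real.cos θ := Real.cos_pos_of_mem_Ioo ⟨by linarith [hθ.1, Real.pi_pos], hθ.2⟩
  have htan_cot : (Real.tan θ : ℂ) * (Real.cos θ / Real.sin θ : ℝ) = 1 := by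
    rw [← ofReal_mul, Real.tan_eq_sin_div_cos]
    field_simp
    exact ofReal_one
  rw [(hasDerivAt_υ_polar α φ hsin.ne').deriv, (hasDerivAt_υ_azimuth α θ φ).deriv,
    υ_add_one α φ hsin]
  constructor
  · linear_combination (Real.cos φ * Real.sin θ * α * υ α θ φ : ℂ) * htan_cot
  · linear_combination (Real.sin φ * Real.sin θ * α * υ α θ φ : ℂ) * htan_cot
      + (Real.sin φ * Real.sin θ * α * υ α θ φ : ℂ) * I_sq
end
end
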